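/- Let A be a periodic abelian group with trivial 2-component and with no cocyclic p-components. Call a non-central involution ξ ∈ Aut A normal if there is exactly one prime p such that the restriction of ξ to A_p is not central in Aut A_p. Then a non-central involution ξ is normal if and only if there exists an extremal involution ε commuting with ξ such that: (i) some extremal involution ε₁ belonging to the same p-component as ε does not commute with ξ, and (ii) every extremal involution ε₂ belonging to a different p-component than ε commutes with ξ. -/

import Mathlib

/-- The `p`-component of an abelian group: the subgroup of elements of `p`-power order. -/
def pComponent (A : Type*) [AddCommGroup A] (p : ℕ) : AddSubgroup A where
  carrier := {a | ∃ n : ℕ, p ^ n • a = 0}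
  zero_mem' := ⟨0, smul_zero _⟩
  add_mem' := by
    rintro a b ⟨n, hn⟩ ⟨m, hm⟩
    refine ⟨n + m, ?_⟩
    have ha : p ^ (n + m) • a = 0 := by
      rw [pow_add, mul_comm, mul_smul, hn, smul_zero]
    have hb : p ^ (n + m) • b = 0 := by
      rw [pow_add, mul_smul, hm, smul_zero]
    rw [smul_add, ha, hb, add_zero]
  neg_mem' := by
    rintro a ⟨n, hn⟩
    exact ⟨n, by rw [smul_neg, hn, neg_zero]⟩


/-- A nontrivial abelian group is cocyclic if it has a nontrivial subgroup contained in
every nontrivial subgroup. -/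
def IsCocyclic (G : Type*) [AddCommGroup G] : Prop :=
  ∃ H : AddSubgroup G, H ≠ ⊥ ∧ ∀ K : AddSubgroup G, K ≠ ⊥ → H ≤ K

/-- For an involution `ε`, the subgroup `A_ε^+ = {a | ε a = a}` of fixed points. -/
def posPart {A : Type*} [AddCommGroup A] (ε : AddAut A) : AddSubgroup A where
  carrier := {a | ε a = a}
  zero_mem' := map_zero ε
  add_mem' := by
    intro a b ha hb
    simp only [Set.mem_setOf_eq] at *
    rw [map_add, ha, hb]
  neg_mem' := by
    intro a ha
    simp only [Set.mem_setOf_eq] at *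
    rw [map_neg, ha]

/-- For an involution `ε`, the subgroup `A_ε^- = {a | ε a = -a}`. -/
def negPart {A : Type*} [AddCommGroup A] (ε : AddAut A) : AddSubgroup A where
  carrier := {a | ε a = -a}
  zero_mem' := by simp
  add_mem' := by
    intro a b ha hb
    simp only [Set.mem_setOf_eq] at *
    rw [map_add, ha, hb, neg_add]
  neg_mem' := by
    intro a ha
    simp only [Set.mem_setOf_eq] at *
    rw [map_neg, ha]

/-- A subgroup is indecomposable if it is nonzero and is not the (internal) direct sum
of two nonzero subgroups. -/
def Indecomp {A : Type*} [AddCommGroup A] (B : AddSubgroup A) : Prop :=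
  B ≠ ⊥ ∧ ¬ ∃ C D : AddSubgroup A, C ≠ ⊥ ∧ D ≠ ⊥ ∧ C ⊓ D = ⊥ ∧ C ⊔ D = B

/-- `ExtremalWith ε B Bp` says that `ε` is an extremal involution whose indecomposable
summand `A_ε` is `B` and whose complementary summand `A_ε^⊥` is `Bp`: `ε² = 1`, `B` is
one of the two summands `A_ε^+`, `A_ε^-` (and `Bp` the other one), and `B` is
indecomposable. -/
def ExtremalWith {A : Type*} [AddCommGroup A] (ε : AddAut A) (B Bp : AddSubgroup A) :
    Prop :=
  ε + ε = 0 ∧ Indecomp B ∧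
    ((B = posPart ε ∧ Bp = negPart ε) ∨ (B = negPart ε ∧ Bp = posPart ε))

/-- An involution is extremal if one of its two summands is indecomposable. -/
def IsExtremal {A : Type*} [AddCommGroup A] (ε : AddAut A) : Prop :=
  ∃ B Bp : AddSubgroup A, ExtremalWith ε B Bp

theorem map_mem_pComponent {A : Type*} [AddCommGroup A] (ξ : AddAut A) (p : ℕ) {a : A}
    (h : a ∈ pComponent A p) : ξ a ∈ pComponent A p := by
  obtain ⟨n, hn⟩ := h
  exact ⟨n, by rw [← map_nsmul ξ, hn, map_zero]⟩

/-- The restriction of an automorphism of `A` to the `p`-component `A_p`. -/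
def restrictComp {A : Type*} [AddCommGroup A] (ξ : AddAut A) (p : ℕ) :
    AddAut ↥(pComponent A p) where
  toFun a := ⟨ξ a, map_mem_pComponent ξ p a.2⟩
  invFun a := ⟨ξ.symm a, map_mem_pComponent ξ.symm p a.2⟩
  left_inv a := Subtype.ext (ξ.symm_apply_apply a.1)
  right_inv a := Subtype.ext (ξ.apply_symm_apply a.1)
  map_add' a b := Subtype.ext (map_add ξ a.1 b.1)

/-!
The restriction of `ξ` to `A_p` is non-central exactly when both eigenspaces `A_ξ^±` meet
`A_p`; otherwise it is `±1`. When they do, `A_p ∩ A_ξ^+` has an indecomposable summand `E`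
of `A` (cyclic, generated by an element whose socle has finite height, or a copy of
`ℤ(p^∞)`), and the reflection in `E` along a `ξ`-invariant complement is an extremal
involution commuting with `ξ`. Twisting the generators of such a summand by elements of
`A_p ∩ A_ξ^-` gives an indecomposable summand that is not `ξ`-invariant, because `2` is
invertible and an invariant indecomposable subgroup lies in one eigenspace; its reflection
does not commute with `ξ`. Conversely, an extremal involution whose summand lies in `A_r`
acts as `±1` on the elements of order prime to `r`, so it commutes with `ξ` whenever `ξ`
is central on `A_r`. The theorem follows by comparing components.
-/

section

open AddSubgroup

variable {A : Type*} [AddCommGroup A]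

theorem AddMonoidHom.map_mem_pComponent (f : A →+ A) {p : ℕ} {a : A}
    (h : a ∈ pComponent A p) : f a ∈ pComponent A p := by
  obtain ⟨n, hn⟩ := h
  exact ⟨n, by rw [← map_nsmul, hn, map_zero]⟩

section Projection

variable {B C : AddSubgroup A}

/-- Projection onto `B` along `C`. -/
noncomputable def projAlong (h : IsCompl B C) : A →+ A :=
  (Submodule.projection _ _ (AddSubgroup.toIntSubmodule.isCompl h)).toAddMonoidHom

theorem projAlong_mem (h : IsCompl B C) (x : A) : projAlong h x ∈ B :=
  Submodule.projection_apply_mem (AddSubgroup.toIntSubmodule.isCompl h) x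

theorem projAlong_eq_self (h : IsCompl B C) {x : A} (hx : x ∈ B) : projAlong h x = x :=
  Submodule.projection_apply_of_mem_left _ hx

theorem projAlong_eq_zero (h : IsCompl B C) {x : A} (hx : x ∈ C) : projAlong h x = 0 :=
  (Submodule.projection_apply_eq_zero_iff _).mpr hx

theorem sub_projAlong_mem (h : IsCompl B C) (x : A) : x - projAlong h x ∈ C :=
  Submodule.sub_projection_mem (AddSubgroup.toIntSubmodule.isCompl h) x

theorem projAlong_eq_zero_iff (h : IsCompl B C) {x : A} : projAlong h x = 0 ↔ x ∈ C :=
  ⟨fun h0 => by simpa [h0] using sub_projAlong_mem h x, projAlong_eq_zero h⟩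

theorem mem_of_disjoint_of_isCompl (h : IsCompl B C) {S : AddSubgroup A} (hS : Disjoint B S)
    (hπS : ∀ x ∈ S, projAlong h x ∈ S) {x : A} (hx : x ∈ S) : x ∈ C :=
  (projAlong_eq_zero_iff h).mp (AddSubgroup.disjoint_def.mp hS (projAlong_mem h x) (hπS x hx))

/-- The involution acting as `-1` on `B` and as `1` on `C`. -/
noncomputable def reflection (h : IsCompl B C) : AddAut A :=
  have hinv : Function.Involutive fun x => x - 2 • projAlong h x := fun x => by
    simp only [map_sub, map_nsmul, projAlong_eq_self h (projAlong_mem h x)]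
    abel
  { toFun := fun x => x - 2 • projAlong h x
    invFun := fun x => x - 2 • projAlong h x
    left_inv := hinv
    right_inv := hinv
    map_add' := fun x y => by simp only [map_add]; abel }

theorem reflection_apply (h : IsCompl B C) (x : A) :
    reflection h x = x - 2 • projAlong h x := rfl

theorem reflection_add_self (h : IsCompl B C) : reflection h + reflection h = 0 := by
  ext x
  simp only [AddAut.add_apply, reflection_apply, map_sub, map_nsmul,
    projAlong_eq_self h (projAlong_mem h x)]
  show _ = x
  abel

end Projection

section Components

def coprimeComponent (A : Type*) [AddCommGroup A] (p : ℕ) : AddSubgroup A where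
  carrier := {a | ∃ m : ℕ, m.Coprime p ∧ m • a = 0}
  zero_mem' := ⟨1, Nat.coprime_one_left p, smul_zero _⟩
  add_mem' := by
    rintro a b ⟨m, hm, ha⟩ ⟨n, hn, hb⟩
    refine ⟨m * n, hm.mul_left hn, ?_⟩
    rw [smul_add, mul_comm, mul_smul, ha, smul_zero, mul_comm, mul_smul, hb, smul_zero,
      add_zero]
  neg_mem' := by
    rintro a ⟨m, hm, ha⟩
    exact ⟨m, hm, by rw [smul_neg, ha, neg_zero]⟩

theorem AddMonoidHom.map_mem_coprimeComponent (f : A →+ A) {p : ℕ} {a : A}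
    (h : a ∈ coprimeComponent A p) : f a ∈ coprimeComponent A p := by
  obtain ⟨m, hm, ha⟩ := h
  exact ⟨m, hm, by rw [← map_nsmul, ha, map_zero]⟩

theorem disjoint_pComponent_coprimeComponent (p : ℕ) :
    Disjoint (pComponent A p) (coprimeComponent A p) := by
  rw [AddSubgroup.disjoint_def]
  rintro x ⟨n, hn⟩ ⟨m, hm, hx⟩
  have h1 : addOrderOf x ∣ Nat.gcd m (p ^ n) :=
    Nat.dvd_gcd (addOrderOf_dvd_of_nsmul_eq_zero hx) (addOrderOf_dvd_of_nsmul_eq_zero hn)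
  rw [Nat.Coprime.pow_right n hm, Nat.dvd_one, AddMonoid.addOrderOf_eq_one_iff] at h1
  exact h1

theorem pComponent_le_coprimeComponent {p q : ℕ} (hp : p.Prime) (hq : q.Prime) (hne : q ≠ p) :
    pComponent A q ≤ coprimeComponent A p := by
  rintro a ⟨n, hn⟩
  exact ⟨q ^ n, Nat.Coprime.pow_left n ((Nat.coprime_primes hq hp).mpr hne), hn⟩

theorem disjoint_pComponent {p q : ℕ} (hp : p.Prime) (hq : q.Prime) (hne : p ≠ q) :
    Disjoint (pComponent A p) (pComponent A q) :=
  (disjoint_pComponent_coprimeComponent p).mono_right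
    (pComponent_le_coprimeComponent hp hq hne.symm)

theorem isCompl_pComponent_coprimeComponent (hA : IsAddTorsion A) {p : ℕ}
    (hp : p.Prime) : IsCompl (pComponent A p) (coprimeComponent A p) := by
  refine ⟨disjoint_pComponent_coprimeComponent p, codisjoint_iff.mpr (eq_top_iff.mpr ?_)⟩
  intro x _
  obtain ⟨k, m, hpm, hN⟩ :=
    Nat.exists_eq_pow_mul_and_not_dvd (hA x).addOrderOf_pos.ne' p hp.one_lt.ne'
  have hcop : Nat.Coprime (p ^ k) m := ((hp.coprime_iff_not_dvd).mpr hpm).pow_left k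
  obtain ⟨α, β, hαβ⟩ := Nat.isCoprime_iff_coprime.mpr hcop
  have hNx : (p ^ k * m) • x = 0 := by rw [← hN, addOrderOf_nsmul_eq_zero]
  have hcomm : ∀ (n : ℕ) (z : ℤ), n • z • x = z • n • x := fun n z => smul_comm n z x
  refine AddSubgroup.mem_sup.mpr ⟨(β * m) • x, ⟨k, ?_⟩, (α * (p ^ k : ℕ)) • x,
    ⟨m, (hp.coprime_iff_not_dvd.mpr hpm).symm, ?_⟩, ?_⟩
  · rw [hcomm, mul_smul, ← natCast_zsmul, smul_smul (m : ℤ), ← Nat.cast_mul,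
      natCast_zsmul, mul_comm m, hNx, smul_zero]
  · rw [hcomm, mul_smul, ← natCast_zsmul, smul_smul ((p ^ k : ℕ) : ℤ),
      ← Nat.cast_mul, natCast_zsmul, hNx, smul_zero]
  · rw [← add_smul, add_comm, hαβ, one_smul]

end Components

section Involution

variable {ξ : AddAut A}

theorem apply_apply_of_add_self (hinv : ξ + ξ = 0) (x : A) : ξ (ξ x) = x :=
  DFunLike.congr_fun hinv x

theorem eq_zero_of_two_nsmul_eq_zero (h2 : pComponent A 2 = ⊥) {x : A} (hx : 2 • x = 0) :
    x = 0 := by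
  have : x ∈ pComponent A 2 := ⟨1, by rwa [pow_one]⟩
  rwa [h2, AddSubgroup.mem_bot] at this

/-- Halving inside the cyclic subgroup generated by `x`. -/
theorem exists_two_mul_zsmul_eq (hA : IsAddTorsion A) (h2 : pComponent A 2 = ⊥) (x : A) :
    ∃ k : ℤ, (2 * k) • x = x := by
  have hx : x ∈ coprimeComponent A 2 := by
    have := (isCompl_pComponent_coprimeComponent hA Nat.prime_two).codisjoint
    rw [h2, codisjoint_iff, bot_sup_eq] at this
    exact this ▸ AddSubgroup.mem_top x
  obtain ⟨m, hm, hmx⟩ := hx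
  obtain ⟨a, b, hab⟩ := Nat.isCoprime_iff_coprime.mpr hm.symm
  refine ⟨a, ?_⟩
  have := congrArg (· • x) hab
  simp only [add_smul, mul_smul b, natCast_zsmul, hmx, smul_zero, add_zero, one_smul] at this
  rwa [mul_comm] at this

theorem disjoint_posPart_negPart (h2 : pComponent A 2 = ⊥) (ξ : AddAut A) :
    Disjoint (posPart ξ) (negPart ξ) := by
  rw [AddSubgroup.disjoint_def]
  intro x (hx₁ : ξ x = x) (hx₂ : ξ x = -x)
  refine eq_zero_of_two_nsmul_eq_zero h2 ?_
  rw [two_nsmul]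
  nth_rewrite 2 [← hx₁]
  rw [hx₂, add_neg_cancel]

theorem mem_inf_posPart_sup_inf_negPart (hA : IsAddTorsion A) (h2 : pComponent A 2 = ⊥)
    (hinv : ξ + ξ = 0) {E : AddSubgroup A} (hE : ∀ x ∈ E, ξ x ∈ E) {x : A} (hx : x ∈ E) :
    x ∈ (E ⊓ posPart ξ) ⊔ (E ⊓ negPart ξ) := by
  obtain ⟨k, hk⟩ := exists_two_mul_zsmul_eq hA h2 (x + ξ x)
  set u := k • (x + ξ x) with hu_def
  have hu : ξ u = u := by
    rw [hu_def, map_zsmul, map_add, apply_apply_of_add_self hinv, add_comm]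
  have hξx : ξ x = u + u - x := by
    rw [← two_zsmul, hu_def, smul_smul, hk]
    abel
  have huE : u ∈ E := E.zsmul_mem (E.add_mem hx (hE x hx)) k
  refine AddSubgroup.mem_sup.mpr ⟨u, ⟨huE, hu⟩, x - u, ⟨E.sub_mem hx huE, ?_⟩, add_sub_cancel u x⟩
  show ξ (x - u) = -(x - u)
  rw [map_sub, hu, hξx]
  abel

theorem isCompl_posPart_negPart (hA : IsAddTorsion A) (h2 : pComponent A 2 = ⊥)
    (hinv : ξ + ξ = 0) : IsCompl (posPart ξ) (negPart ξ) := by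
  refine ⟨disjoint_posPart_negPart h2 ξ, codisjoint_iff.mpr (eq_top_iff.mpr fun x _ => ?_)⟩
  simpa only [top_inf_eq] using
    mem_inf_posPart_sup_inf_negPart hA h2 hinv (fun y _ => mem_top (ξ y)) (mem_top x)

/-- Since `2` is invertible, `E` is the sum of its intersections with the two eigenspaces. -/
theorem le_posPart_or_le_negPart (hA : IsAddTorsion A) (h2 : pComponent A 2 = ⊥)
    (hinv : ξ + ξ = 0) {E : AddSubgroup A} (hE : Indecomp E) (hξE : ∀ x ∈ E, ξ x ∈ E) :
    E ≤ posPart ξ ∨ E ≤ negPart ξ := by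
  have hjoin : (E ⊓ posPart ξ) ⊔ (E ⊓ negPart ξ) = E :=
    le_antisymm (sup_le inf_le_left inf_le_left) fun x hx =>
      mem_inf_posPart_sup_inf_negPart hA h2 hinv hξE hx
  by_cases hpos : E ⊓ posPart ξ = ⊥
  · rw [← hjoin, hpos, bot_sup_eq]
    exact Or.inr inf_le_right
  by_cases hneg : E ⊓ negPart ξ = ⊥
  · rw [← hjoin, hneg, sup_bot_eq]
    exact Or.inl inf_le_right
  exact (hE.2 ⟨_, _, hpos, hneg, disjoint_iff.mp
    ((disjoint_posPart_negPart h2 ξ).mono inf_le_right inf_le_right), hjoin⟩).elim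

theorem map_mem_negPart_of_commute {ε : AddAut A} (h : ε + ξ = ξ + ε) {x : A}
    (hx : x ∈ negPart ε) : ξ x ∈ negPart ε := by
  show ε (ξ x) = -ξ x
  rw [← AddAut.add_apply, h, AddAut.add_apply, show ε x = -x from hx, map_neg]

end Involution

section Reflection

variable {B C : AddSubgroup A}

theorem negPart_reflection (h2 : pComponent A 2 = ⊥) (h : IsCompl B C) :
    negPart (reflection h) = B := by
  ext x
  refine ⟨fun hx => ?_, fun hx => ?_⟩
  · have hx' : x - 2 • projAlong h x = -x := hx
    have : 2 • (x - projAlong h x) = 0 := by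
      rw [smul_sub, two_nsmul x, ← sub_eq_zero.mpr hx']
      abel
    rw [sub_eq_zero.mp (eq_zero_of_two_nsmul_eq_zero h2 this)]
    exact projAlong_mem h x
  · show x - 2 • projAlong h x = -x
    rw [projAlong_eq_self h hx, two_nsmul]
    abel

theorem posPart_reflection (h2 : pComponent A 2 = ⊥) (h : IsCompl B C) :
    posPart (reflection h) = C := by
  ext x
  show x - 2 • projAlong h x = x ↔ x ∈ C
  rw [sub_eq_self, ← projAlong_eq_zero_iff h]
  exact ⟨eq_zero_of_two_nsmul_eq_zero h2, fun h0 => by rw [h0, smul_zero]⟩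

theorem extremalWith_reflection (h2 : pComponent A 2 = ⊥) (h : IsCompl B C) (hB : Indecomp B) :
    ExtremalWith (reflection h) B C :=
  ⟨reflection_add_self h, hB,
    Or.inr ⟨(negPart_reflection h2 h).symm, (posPart_reflection h2 h).symm⟩⟩

theorem reflection_commute {ξ : AddAut A} (h : IsCompl B C) (hB : ∀ x ∈ B, ξ x ∈ B)
    (hC : ∀ x ∈ C, ξ x ∈ C) : reflection h + ξ = ξ + reflection h := by
  have hπ : ∀ x, projAlong h (ξ x) = ξ (projAlong h x) := fun x => by
    have hx : ξ x = ξ (projAlong h x) + ξ (x - projAlong h x) := by rw [← map_add, add_sub_cancel]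
    rw [hx, map_add, projAlong_eq_self h (hB _ (projAlong_mem h x)),
      projAlong_eq_zero h (hC _ (sub_projAlong_mem h x)), add_zero]
  ext x
  simp only [AddAut.add_apply, reflection_apply, hπ, map_sub, map_nsmul]

end Reflection

section Summands

variable {p : ℕ}

theorem exists_nsmul_ne_zero_of_mem_pComponent {x : A} (hx : x ∈ pComponent A p) (hx0 : x ≠ 0) :
    ∃ m : ℕ, p ^ m • x ≠ 0 ∧ p • p ^ m • x = 0 := by
  classical
  have hn : ∃ n, p ^ n • x = 0 := hx
  obtain ⟨m, hm⟩ : ∃ m, Nat.find hn = m + 1 :=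
    Nat.exists_eq_succ_of_ne_zero fun h => hx0 (by simpa [h] using Nat.find_spec hn)
  refine ⟨m, Nat.find_min hn (by omega), ?_⟩
  rw [smul_smul, ← pow_succ', ← hm, Nat.find_spec hn]

theorem exists_mem_ne_zero_nsmul_eq_zero {S : AddSubgroup A} (hSp : S ≤ pComponent A p)
    (hS : S ≠ ⊥) : ∃ a ∈ S, a ≠ 0 ∧ p • a = 0 := by
  obtain ⟨a, ha, ha0⟩ := S.bot_or_exists_ne_zero.resolve_left hS
  obtain ⟨m, hm0, hm⟩ := exists_nsmul_ne_zero_of_mem_pComponent (hSp ha) ha0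
  exact ⟨_, S.nsmul_mem ha _, hm0, hm⟩

theorem isCoprime_of_not_dvd (hp : p.Prime) {t : ℤ} (ht : ¬(p : ℤ) ∣ t) : IsCoprime t p :=
  ((Nat.prime_iff_prime_int.mp hp).coprime_iff_not_dvd.mpr ht).symm

theorem mem_zmultiples_of_socle (hp : p.Prime) {E : AddSubgroup A} (hE : E ≤ pComponent A p)
    {g : A} (hg : p • g = 0) (hsoc : ∀ y ∈ E, p • y = 0 → y ∈ zmultiples g) {z : A}
    (hz : z ∈ E) (hz0 : z ≠ 0) : g ∈ zmultiples z := by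
  obtain ⟨m, hy0, hpy⟩ := exists_nsmul_ne_zero_of_mem_pComponent (hE hz) hz0
  obtain ⟨s, hs⟩ := mem_zmultiples_iff.mp (hsoc _ (E.nsmul_mem hz _) hpy)
  have hg0 : g ≠ 0 := by rintro rfl; exact hy0 (by rw [← hs, smul_zero])
  have hps : ¬(p : ℤ) ∣ s := by
    rintro ⟨s', rfl⟩
    exact hy0 (by rw [← hs, mul_comm, mul_smul, natCast_zsmul, hg, smul_zero])
  obtain ⟨α, β, hαβ⟩ := isCoprime_of_not_dvd hp hps
  refine mem_zmultiples_iff.mpr ⟨α * p ^ m, ?_⟩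
  calc (α * p ^ m) • z = α • s • g + β • (p : ℤ) • g := by
        rw [hs, natCast_zsmul, hg, smul_zero, add_zero, mul_smul, ← natCast_zsmul,
          Nat.cast_pow]
    _ = g := by rw [smul_smul, smul_smul, ← add_smul, hαβ, one_smul]

theorem mem_of_socle {E D : AddSubgroup A} {g : A} (hsoc : ∀ z ∈ E, z ≠ 0 → g ∈ zmultiples z)
    (hDE : D ≤ E) (hD : D ≠ ⊥) : g ∈ D := by
  obtain ⟨z, hz, hz0⟩ := D.bot_or_exists_ne_zero.resolve_left hD
  exact zmultiples_le_of_mem hz (hsoc z (hDE hz) hz0)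

theorem indecomp_of_socle {E : AddSubgroup A} {g : A} (hgE : g ∈ E) (hg0 : g ≠ 0)
    (hsoc : ∀ z ∈ E, z ≠ 0 → g ∈ zmultiples z) : Indecomp E := by
  refine ⟨fun hE => hg0 (by rwa [hE, AddSubgroup.mem_bot] at hgE), ?_⟩
  rintro ⟨C, D, hC, hD, hCD, hCDE⟩
  have hg : g ∈ C ⊓ D :=
    ⟨mem_of_socle hsoc (hCDE ▸ le_sup_left) hC, mem_of_socle hsoc (hCDE ▸ le_sup_right) hD⟩
  rw [hCD, AddSubgroup.mem_bot] at hg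
  exact hg0 hg

theorem mem_sup_of_nsmul_mem (hp : p.Prime) {E seed M : AddSubgroup A} {g : A} (hgE : g ∈ E)
    (hM : Maximal (fun C : AddSubgroup A => seed ≤ C ∧ g ∉ C) M) {z : A} (hz : p • z ∈ M) :
    z ∈ E ⊔ M := by
  by_cases hzM : z ∈ M
  · exact mem_sup_right hzM
  have hgM' : g ∈ M ⊔ zmultiples z := by
    by_contra hg
    exact hzM (hM.eq_of_le ⟨hM.prop.1.trans le_sup_left, hg⟩ le_sup_left ▸
      mem_sup_right (mem_zmultiples z))
  obtain ⟨c, hc, w, hw, rfl⟩ := mem_sup.mp hgM'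
  obtain ⟨j, rfl⟩ := mem_zmultiples_iff.mp hw
  have hpj : ¬(p : ℤ) ∣ j := by
    rintro ⟨j', rfl⟩
    refine hM.prop.2 (M.add_mem hc ?_)
    rw [mul_comm, mul_smul, natCast_zsmul]
    exact M.zsmul_mem hz j'
  obtain ⟨α, β, hαβ⟩ := isCoprime_of_not_dvd hp hpj
  have hz' : z = α • ((c + j • z) - c) + β • (p • z) := by
    rw [add_sub_cancel_left, smul_smul, ← natCast_zsmul, smul_smul, ← add_smul, hαβ, one_smul]
  rw [hz']
  exact add_mem (zsmul_mem (sub_mem (mem_sup_left hgE) (mem_sup_right hc)) α)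
    (zsmul_mem (mem_sup_right hz) β)

/-- The complement is a maximal subgroup containing `seed` and avoiding `g` (Zorn). -/
theorem exists_isCompl_of_socle (hA : IsAddTorsion A) (hp : p.Prime) {E seed : AddSubgroup A}
    {g : A} (hgE : g ∈ E) (hsoc : ∀ z ∈ E, z ≠ 0 → g ∈ zmultiples z)
    (hseed : coprimeComponent A p ≤ seed) (hgseed : g ∉ seed)
    (hdiv : ∀ C : AddSubgroup A, seed ≤ C → g ∉ C →
      ∀ e ∈ E, ∀ x : A, p • x - e ∈ C → ∃ e' ∈ E, p • e' = e) :
    ∃ C, IsCompl E C := by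
  obtain ⟨M, -, hM⟩ := zorn_le_nonempty₀ {C : AddSubgroup A | seed ≤ C ∧ g ∉ C}
    (fun c hc hchain y hy => ⟨sSup c, ⟨(hc hy).1.trans (le_sSup hy), fun hg => by
      obtain ⟨C, hC, hgC⟩ := (mem_sSup_of_directedOn ⟨y, hy⟩ hchain.directedOn).mp hg
      exact (hc hC).2 hgC⟩, fun _ => le_sSup⟩) seed ⟨le_rfl, hgseed⟩
  refine ⟨M, disjoint_iff.mpr (by_contra fun hEM => hM.prop.2 ?_), codisjoint_iff.mpr ?_⟩
  · exact (mem_of_socle hsoc inf_le_left hEM).2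
  have hpow : ∀ n : ℕ, ∀ y : A, p ^ n • y = 0 → y ∈ E ⊔ M := by
    intro n
    induction n with
    | zero => intro y hy; rw [pow_zero, one_smul] at hy; exact hy ▸ zero_mem _
    | succ n ih =>
      intro y hy
      obtain ⟨e, he, c, hc, hec⟩ := mem_sup.mp (ih (p • y) (by rw [smul_smul, ← pow_succ, hy]))
      obtain ⟨e', he', rfl⟩ := hdiv M hM.prop.1 hM.prop.2 e he y (by rw [← hec]; simpa)
      have : y - e' ∈ E ⊔ M := mem_sup_of_nsmul_mem hp hgE hM (by rw [smul_sub, ← hec]; simpa)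
      simpa using add_mem this (mem_sup_left he')
  refine eq_top_iff.mpr fun x _ => ?_
  obtain ⟨y, ⟨n, hy⟩, z, hz, rfl⟩ :=
    mem_sup.mp ((isCompl_pComponent_coprimeComponent hA hp).codisjoint.eq_top ▸ mem_top x)
  exact add_mem (hpow n y hy) (mem_sup_right (hM.prop.1 (hseed hz)))

theorem mem_zmultiples_pow_nsmul (hp : p.Prime) {b : A} {n : ℕ}
    (hb : addOrderOf b = p ^ (n + 1)) {y : A} (hy : y ∈ zmultiples b) (hpy : p • y = 0) :
    y ∈ zmultiples (p ^ n • b) := by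
  obtain ⟨t, rfl⟩ := mem_zmultiples_iff.mp hy
  have hdvd := addOrderOf_dvd_iff_zsmul_eq_zero.mpr
    (show ((p : ℤ) * t) • b = 0 by rwa [mul_smul, natCast_zsmul])
  rw [hb, Nat.cast_pow, pow_succ', mul_dvd_mul_iff_left (by exact_mod_cast hp.ne_zero)] at hdvd
  obtain ⟨s, rfl⟩ := hdvd
  exact mem_zmultiples_iff.mpr ⟨s, by rw [mul_comm, mul_smul, ← Nat.cast_pow, natCast_zsmul]⟩

theorem indecomp_and_exists_isCompl_zmultiples (hA : IsAddTorsion A) (hp : p.Prime) {b : A} {n : ℕ}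
    (hb : p ^ (n + 1) • b = 0) (hht : ∀ t : A, p ^ (n + 1) • t ≠ p ^ n • b) :
    Indecomp (zmultiples b) ∧ ∃ C, IsCompl (zmultiples b) C := by
  have hg0 : p ^ n • b ≠ 0 := fun h => hht 0 (by rw [smul_zero, h])
  have hord : addOrderOf b = p ^ (n + 1) := addOrderOf_eq_prime_pow (hp := ⟨hp⟩) hg0 hb
  have hpg : p • p ^ n • b = 0 := by rwa [smul_smul, ← pow_succ']
  have hbp : zmultiples b ≤ pComponent A p := zmultiples_le_of_mem ⟨n + 1, hb⟩
  have hsoc := fun z => mem_zmultiples_of_socle hp hbp hpg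
    (fun y hy hpy => mem_zmultiples_pow_nsmul hp hord hy hpy) (z := z)
  have hgb : p ^ n • b ∈ zmultiples b := nsmul_mem (mem_zmultiples b) _
  refine ⟨indecomp_of_socle hgb hg0 hsoc, exists_isCompl_of_socle hA hp hgb hsoc
    (le_sup_right (a := (nsmulAddMonoidHom (p ^ (n + 1)) : A →+ A).range)) ?_ ?_⟩
  · intro hg
    obtain ⟨_, ⟨t, rfl⟩, ρ, hρ, hgρ⟩ := mem_sup.mp hg
    have hpc := isCompl_pComponent_coprimeComponent hA hp
    apply hht (projAlong hpc t)
    have := congrArg (projAlong hpc) hgρ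
    rwa [projAlong_eq_self hpc (hbp hgb), map_add, projAlong_eq_zero hpc hρ, add_zero,
      nsmulAddMonoidHom_apply, map_nsmul] at this
  · intro C hseedC hgC e he x hxe
    obtain ⟨t, rfl⟩ := mem_zmultiples_iff.mp he
    by_cases hpt : (p : ℤ) ∣ t
    · obtain ⟨t', rfl⟩ := hpt
      exact ⟨t' • b, zsmul_mem (mem_zmultiples b) t', by rw [← natCast_zsmul, smul_smul]⟩
    -- otherwise `b` is a multiple of `e`, so `p ^ n • b` lies in `p ^ (n + 1) • A + C ≤ C`
    refine absurd ?_ hgC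
    obtain ⟨α, β, hαβ⟩ := (isCoprime_of_not_dvd hp hpt).pow_right (n := n + 1)
    have hb' : b = α • t • b := by
      calc b = (α * t + β * (p : ℤ) ^ (n + 1)) • b := by rw [hαβ, one_smul]
        _ = α • t • b := by
          rw [add_smul, mul_smul, mul_smul β, ← Nat.cast_pow, natCast_zsmul, hb, smul_zero,
            add_zero, smul_smul]
    have hpx : p ^ (n + 1) • x ∈ C := hseedC (mem_sup_left ⟨x, rfl⟩)
    rw [hb', smul_comm, ← sub_sub_cancel (p • x) (t • b), smul_sub, smul_smul, ← pow_succ]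
    exact C.zsmul_mem (C.sub_mem hpx (C.nsmul_mem hxe _)) α

end Summands

section Chains

variable {p : ℕ} {x : ℕ → A}

theorem pow_nsmul_chain (hx : ∀ i, p • x (i + 1) = x i) (i : ℕ) : p ^ i • x i = x 0 := by
  induction i with
  | zero => rw [pow_zero, one_smul]
  | succ i ih => rw [pow_succ, mul_smul, hx, ih]

theorem mem_iSup_zmultiples_chain (hx : ∀ i, p • x (i + 1) = x i) {y : A} :
    y ∈ ⨆ i, zmultiples (x i) ↔ ∃ i, y ∈ zmultiples (x i) :=
  mem_iSup_of_directed (Monotone.directed_le (monotone_nat_of_le_succ fun i =>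
    zmultiples_le_of_mem (hx i ▸ nsmul_mem (mem_zmultiples _) p)))

/-- `⨆ i, zmultiples (x i)` is a copy of `ℤ(p^∞)`. -/
theorem indecomp_and_exists_isCompl_iSup_zmultiples (hA : IsAddTorsion A) (hp : p.Prime)
    (hx : ∀ i, p • x (i + 1) = x i) (hx0 : x 0 ≠ 0) (hpx0 : p • x 0 = 0) :
    Indecomp (⨆ i, zmultiples (x i)) ∧ ∃ C, IsCompl (⨆ i, zmultiples (x i)) C := by
  have hord : ∀ i, addOrderOf (x i) = p ^ (i + 1) := fun i =>
    addOrderOf_eq_prime_pow (hp := ⟨hp⟩) (by rwa [pow_nsmul_chain hx])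
      (by rw [pow_succ', mul_smul, pow_nsmul_chain hx, hpx0])
  have hEp : ⨆ i, zmultiples (x i) ≤ pComponent A p := iSup_le fun i =>
    zmultiples_le_of_mem ⟨i + 1, by rw [pow_succ', mul_smul, pow_nsmul_chain hx, hpx0]⟩
  have hgE : x 0 ∈ ⨆ i, zmultiples (x i) := (mem_iSup_zmultiples_chain hx).mpr ⟨0, mem_zmultiples _⟩
  have hsoc := fun z => mem_zmultiples_of_socle hp hEp hpx0 (z := z) fun y hy hpy => by
    obtain ⟨i, hi⟩ := (mem_iSup_zmultiples_chain hx).mp hy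
    simpa only [pow_nsmul_chain hx] using mem_zmultiples_pow_nsmul hp (hord i) hi hpy
  refine ⟨indecomp_of_socle hgE hx0 hsoc, exists_isCompl_of_socle hA hp hgE hsoc le_rfl
    (fun h => hx0 ?_) fun _ _ _ e he _ _ => ?_⟩
  · exact AddSubgroup.disjoint_def.mp (disjoint_pComponent_coprimeComponent p) (hEp hgE) h
  · obtain ⟨i, hi⟩ := (mem_iSup_zmultiples_chain hx).mp he
    obtain ⟨t, rfl⟩ := mem_zmultiples_iff.mp hi
    refine ⟨t • x (i + 1), (mem_iSup_zmultiples_chain hx).mpr ⟨i + 1, ?_⟩, by rw [smul_comm, hx]⟩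
    exact zsmul_mem (mem_zmultiples _) t

theorem exists_chain_of_divisible {S : AddSubgroup A} (hdiv : ∀ a ∈ S, ∃ b ∈ S, p • b = a)
    {a : A} (ha : a ∈ S) : ∃ x : ℕ → A, (∀ i, x i ∈ S) ∧ x 0 = a ∧ ∀ i, p • x (i + 1) = x i := by
  choose root hroot_mem hroot using hdiv
  let x : ℕ → S := fun i =>
    Nat.rec (motive := fun _ => S) ⟨a, ha⟩ (fun _ y => ⟨root y y.2, hroot_mem _ _⟩) i
  exact ⟨fun i => x i, fun i => (x i).2, rfl, fun i => hroot (x i : A) (x i).2⟩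

end Chains

section Height

variable {p : ℕ}

/-- Either some element of order `p` of the pure subgroup `S` has finite height in `A`,
or `S` is `p`-divisible. -/
theorem exists_finite_height_or_divisible {S : AddSubgroup A} (hSp : S ≤ pComponent A p)
    (hpure : ∀ a ∈ S, ∀ (m : ℕ) (t : A), m • t = a → ∃ u ∈ S, m • u = a) :
    (∃ b ∈ S, ∃ n : ℕ, p ^ (n + 1) • b = 0 ∧ ∀ t : A, p ^ (n + 1) • t ≠ p ^ n • b) ∨
      ∀ a ∈ S, ∃ b ∈ S, p • b = a := by
  classical
  by_cases h : ∃ a ∈ S, p • a = 0 ∧ ∃ j : ℕ, ∀ t : A, p ^ j • t ≠ a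
  · obtain ⟨a, ha, hpa, hj⟩ := h
    obtain ⟨n, hn⟩ : ∃ n, Nat.find hj = n + 1 :=
      Nat.exists_eq_succ_of_ne_zero fun h0 => Nat.find_spec hj a (by rw [h0, pow_zero, one_smul])
    obtain ⟨t, ht⟩ : ∃ t : A, p ^ n • t = a := by
      simpa using Nat.find_min hj (show n < Nat.find hj by omega)
    obtain ⟨b, hb, rfl⟩ := hpure a ha _ t ht
    refine Or.inl ⟨b, hb, n, by rwa [pow_succ', mul_smul], fun t' => ?_⟩
    exact hn ▸ Nat.find_spec hj t'
  push Not at h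
  refine Or.inr fun a ha => ?_
  obtain ⟨k, hk⟩ := hSp ha
  induction k generalizing a with
  | zero => exact ⟨0, S.zero_mem, by rw [smul_zero, ← hk, pow_zero, one_smul]⟩
  | succ k ih =>
    have hka := S.nsmul_mem ha (p ^ k)
    obtain ⟨t, ht⟩ := h _ hka (by rw [smul_smul, ← pow_succ', hk]) (k + 1)
    obtain ⟨w, hw, hwa⟩ := hpure _ hka _ t ht
    obtain ⟨y, hy, hya⟩ := ih (a - p • w) (S.sub_mem ha (S.nsmul_mem hw p))
      (by rw [smul_sub, smul_smul, ← pow_succ, hwa, sub_self])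
    exact ⟨w + y, S.add_mem hw hy, by rw [smul_add, hya, add_sub_cancel]⟩

end Height

section Extremal

variable {p : ℕ} {S T : AddSubgroup A}

theorem exists_mem_inf_pComponent_nsmul_eq (hA : IsAddTorsion A) (hp : p.Prime)
    (h : IsCompl S T) {a : A} (ha : a ∈ S ⊓ pComponent A p) {m : ℕ} {t : A} (ht : m • t = a) :
    ∃ u ∈ S ⊓ pComponent A p, m • u = a := by
  have hpc := isCompl_pComponent_coprimeComponent hA hp
  refine ⟨projAlong h (projAlong hpc t), ⟨projAlong_mem h _,
    AddMonoidHom.map_mem_pComponent _ (projAlong_mem hpc t)⟩, ?_⟩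
  rw [← map_nsmul, ← map_nsmul, ht, projAlong_eq_self hpc ha.2, projAlong_eq_self h ha.1]

theorem add_notMem_of_isCompl (h : IsCompl S T) {b w : A} (hb : b ∈ S) (hb0 : b ≠ 0)
    (hw : w ∈ T) (hw0 : w ≠ 0) : b + w ∉ S ∧ b + w ∉ T := by
  refine ⟨fun hbw => hw0 ?_, fun hbw => hb0 ?_⟩
  · exact AddSubgroup.disjoint_def.mp h.disjoint (by simpa using S.sub_mem hbw hb) hw
  · exact AddSubgroup.disjoint_def.mp h.disjoint hb (by simpa using T.sub_mem hbw hw)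

theorem isCompl_inf_sup {E C : AddSubgroup A} (h : IsCompl S T) (hEC : IsCompl E C)
    (hES : E ≤ S) : IsCompl E ((C ⊓ S) ⊔ T) := by
  refine ⟨AddSubgroup.disjoint_def.mpr fun {y} hyE hy => ?_, codisjoint_iff.mpr
    (eq_top_iff.mpr fun x _ => ?_)⟩
  · obtain ⟨c, hc, v, hv, rfl⟩ := mem_sup.mp hy
    have hv0 : v = 0 := AddSubgroup.disjoint_def.mp h.disjoint
      (by simpa using S.sub_mem (hES hyE) hc.2) hv
    rw [hv0, add_zero] at hyE ⊢
    exact AddSubgroup.disjoint_def.mp hEC.disjoint hyE hc.1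
  · obtain ⟨s, hs, t, ht, rfl⟩ := mem_sup.mp (h.codisjoint.eq_top ▸ mem_top x)
    obtain ⟨e, he, c, hc, rfl⟩ := mem_sup.mp (hEC.codisjoint.eq_top ▸ mem_top s)
    rw [add_assoc]
    exact add_mem (mem_sup_left he) (mem_sup_right (add_mem (mem_sup_left
      ⟨hc, by simpa using S.sub_mem hs (hES he)⟩) (mem_sup_right ht)))

theorem exists_indecomp_summand_le (hA : IsAddTorsion A) (hp : p.Prime) (h : IsCompl S T)
    (hS : S ⊓ pComponent A p ≠ ⊥) :
    ∃ E C, IsCompl E C ∧ Indecomp E ∧ E ≤ S ⊓ pComponent A p := by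
  rcases exists_finite_height_or_divisible inf_le_right
    (fun a ha m t => exists_mem_inf_pComponent_nsmul_eq hA hp h ha) with
    ⟨b, hb, n, hbn, hht⟩ | hdiv
  · obtain ⟨hind, C, hC⟩ := indecomp_and_exists_isCompl_zmultiples hA hp hbn hht
    exact ⟨_, C, hC, hind, zmultiples_le_of_mem hb⟩
  · obtain ⟨a, ha, ha0, hpa⟩ := exists_mem_ne_zero_nsmul_eq_zero inf_le_right hS
    obtain ⟨x, hxS, rfl, hx⟩ := exists_chain_of_divisible hdiv ha
    obtain ⟨hind, C, hC⟩ := indecomp_and_exists_isCompl_iSup_zmultiples hA hp hx ha0 hpa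
    exact ⟨_, C, hC, hind, iSup_le fun i => zmultiples_le_of_mem (hxS i)⟩

/-- Twisting a cyclic summand of `S` by an element of order `p` of `T` keeps the height
of its socle, hence gives a summand straddling `S` and `T`. -/
theorem exists_indecomp_summand_twisted_of_finite_height (hA : IsAddTorsion A) (hp : p.Prime)
    (h : IsCompl S T) (hT : T ⊓ pComponent A p ≠ ⊥) {b : A} (hb : b ∈ S ⊓ pComponent A p)
    {n : ℕ} (hbn : p ^ (n + 1) • b = 0) (hht : ∀ t : A, p ^ (n + 1) • t ≠ p ^ n • b) :
    ∃ E C x, IsCompl E C ∧ Indecomp E ∧ E ≤ pComponent A p ∧ x ∈ E ∧ x ∉ S ∧ x ∉ T := by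
  obtain ⟨w, hw, hw0, hpw⟩ := exists_mem_ne_zero_nsmul_eq_zero inf_le_right hT
  have hb0 : b ≠ 0 := by rintro rfl; exact hht 0 (by rw [smul_zero, smul_zero])
  have hht' : ∀ t : A, p ^ (n + 1) • t ≠ p ^ n • (b + w) := fun t ht => hht (projAlong h t) (by
    rw [← map_nsmul, ht, map_nsmul, map_add, projAlong_eq_self h hb.1,
      projAlong_eq_zero h hw.1, add_zero])
  have hbwn : p ^ (n + 1) • (b + w) = 0 := by
    rw [smul_add, hbn, pow_succ, mul_smul, hpw, smul_zero, add_zero]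
  obtain ⟨hind, C, hC⟩ := indecomp_and_exists_isCompl_zmultiples hA hp hbwn hht'
  exact ⟨_, C, b + w, hC, hind, zmultiples_le_of_mem (add_mem hb.2 hw.2), mem_zmultiples _,
    add_notMem_of_isCompl h hb.1 hb0 hw.1 hw0⟩

theorem exists_indecomp_summand_twisted (hA : IsAddTorsion A) (hp : p.Prime) (h : IsCompl S T)
    (hS : S ⊓ pComponent A p ≠ ⊥) (hT : T ⊓ pComponent A p ≠ ⊥) :
    ∃ E C x, IsCompl E C ∧ Indecomp E ∧ E ≤ pComponent A p ∧ x ∈ E ∧ x ∉ S ∧ x ∉ T := by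
  rcases exists_finite_height_or_divisible inf_le_right
    (fun a ha m t => exists_mem_inf_pComponent_nsmul_eq hA hp h ha) with
    ⟨b, hb, n, hbn, hht⟩ | hdivS
  · exact exists_indecomp_summand_twisted_of_finite_height hA hp h hT hb hbn hht
  rcases exists_finite_height_or_divisible inf_le_right
    (fun a ha m t => exists_mem_inf_pComponent_nsmul_eq hA hp h.symm ha) with
    ⟨b, hb, n, hbn, hht⟩ | hdivT
  · obtain ⟨E, C, x, hC, hind, hE, hx, hxT, hxS⟩ :=
      exists_indecomp_summand_twisted_of_finite_height hA hp h.symm hS hb hbn hht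
    exact ⟨E, C, x, hC, hind, hE, hx, hxS, hxT⟩
  obtain ⟨a, ha, ha0, hpa⟩ := exists_mem_ne_zero_nsmul_eq_zero inf_le_right hS
  obtain ⟨c, hc, hc0, hpc⟩ := exists_mem_ne_zero_nsmul_eq_zero inf_le_right hT
  obtain ⟨x, hxS, rfl, hx⟩ := exists_chain_of_divisible hdivS ha
  obtain ⟨y, hyT, rfl, hy⟩ := exists_chain_of_divisible hdivT hc
  have hxy := add_notMem_of_isCompl h (hxS 0).1 ha0 (hyT 0).1 hc0
  have hz : ∀ i, p • (x (i + 1) + y (i + 1)) = x i + y i := fun i => by rw [smul_add, hx, hy]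
  obtain ⟨hind, C, hC⟩ :=
    indecomp_and_exists_isCompl_iSup_zmultiples (x := fun i => x i + y i) hA hp hz
      (fun h0 => hxy.1 (by rw [h0]; exact zero_mem S)) (by rw [smul_add, hpa, hpc, add_zero])
  exact ⟨_, C, x 0 + y 0, hC, hind,
    iSup_le fun i => zmultiples_le_of_mem (add_mem (hxS i).2 (hyT i).2),
    (mem_iSup_zmultiples_chain (x := fun i => x i + y i) hz).mpr ⟨0, mem_zmultiples _⟩, hxy⟩

variable {ξ : AddAut A}

theorem exists_extremalWith_commute (hA : IsAddTorsion A) (h2 : pComponent A 2 = ⊥)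
    (hinv : ξ + ξ = 0) (hp : p.Prime) (hS : posPart ξ ⊓ pComponent A p ≠ ⊥) :
    ∃ (ε : AddAut A) (B Bp : AddSubgroup A), ExtremalWith ε B Bp ∧
      B ≤ pComponent A p ∧ ε + ξ = ξ + ε := by
  have hPN := isCompl_posPart_negPart hA h2 hinv
  obtain ⟨E, C, hEC, hind, hE⟩ := exists_indecomp_summand_le hA hp hPN hS
  have hEC' := isCompl_inf_sup hPN hEC (hE.trans inf_le_left)
  refine ⟨reflection hEC', E, _, extremalWith_reflection h2 hEC' hind, hE.trans inf_le_right,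
    reflection_commute hEC' (fun x hx => ?_) (fun x hx => ?_)⟩
  · rwa [show ξ x = x from (hE hx).1]
  · obtain ⟨c, hc, v, hv, rfl⟩ := mem_sup.mp hx
    rw [map_add, show ξ c = c from hc.2, show ξ v = -v from hv]
    exact add_mem (mem_sup_left hc) (mem_sup_right (neg_mem hv))

theorem exists_extremalWith_not_commute (hA : IsAddTorsion A) (h2 : pComponent A 2 = ⊥)
    (hinv : ξ + ξ = 0) (hp : p.Prime) (hpos : posPart ξ ⊓ pComponent A p ≠ ⊥)
    (hneg : negPart ξ ⊓ pComponent A p ≠ ⊥) :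
    ∃ (ε : AddAut A) (B Bp : AddSubgroup A), ExtremalWith ε B Bp ∧
      B ≤ pComponent A p ∧ ε + ξ ≠ ξ + ε := by
  obtain ⟨E, C, x, hEC, hind, hE, hx, hxpos, hxneg⟩ :=
    exists_indecomp_summand_twisted hA hp (isCompl_posPart_negPart hA h2 hinv) hpos hneg
  refine ⟨reflection hEC, E, C, extremalWith_reflection h2 hEC hind, hE, fun hcomm => ?_⟩
  have hξE : ∀ y ∈ E, ξ y ∈ E := fun y hy => by
    have := map_mem_negPart_of_commute hcomm ((negPart_reflection h2 hEC).symm ▸ hy)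
    rwa [negPart_reflection h2 hEC] at this
  rcases le_posPart_or_le_negPart hA h2 hinv hind hξE with hle | hle
  exacts [hxpos (hle hx), hxneg (hle hx)]

end Extremal

section Center

variable {ξ : AddAut A} {p : ℕ}

theorem restrictComp_mem_center_of_eq_zsmul {z : ℤ} (h : ∀ a ∈ pComponent A p, ξ a = z • a) :
    restrictComp ξ p ∈ AddSubgroup.center (AddAut ↥(pComponent A p)) := by
  refine AddSubgroup.mem_center_iff.mpr fun g => AddEquiv.ext fun x => Subtype.ext ?_
  have hx : restrictComp ξ p x = z • x := Subtype.ext (h x x.2)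
  show (g (restrictComp ξ p x) : A) = ξ (g x)
  rw [hx, map_zsmul, h _ (g x).2, AddSubgroup.coe_zsmul]

theorem posPart_ne_bot_and_negPart_ne_bot (hA : IsAddTorsion A) (h2 : pComponent A 2 = ⊥)
    (hinv : ξ + ξ = 0) (h : restrictComp ξ p ∉ AddSubgroup.center (AddAut ↥(pComponent A p))) :
    posPart ξ ⊓ pComponent A p ≠ ⊥ ∧ negPart ξ ⊓ pComponent A p ≠ ⊥ := by
  have hPN := isCompl_posPart_negPart hA h2 hinv
  have hπ : ∀ (f : A →+ A), ∀ a ∈ pComponent A p, f a ∈ pComponent A p :=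
    fun f a ha => f.map_mem_pComponent ha
  refine ⟨fun hbot => h (restrictComp_mem_center_of_eq_zsmul (z := -1) fun a ha => ?_),
    fun hbot => h (restrictComp_mem_center_of_eq_zsmul (z := 1) fun a ha => ?_)⟩
  · rw [neg_one_zsmul]
    exact mem_of_disjoint_of_isCompl hPN (disjoint_iff.mpr hbot) (hπ _) ha
  · rw [one_zsmul]
    exact mem_of_disjoint_of_isCompl hPN.symm (disjoint_iff.mpr hbot) (hπ _) ha

/-- An extremal involution whose indecomposable summand lies in `A_r` acts as `±1` on the
elements of order prime to `r`. -/
theorem exists_zsmul_of_extremalWith (hA : IsAddTorsion A) (h2 : pComponent A 2 = ⊥)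
    {ε : AddAut A} {B Bp : AddSubgroup A} (hext : ExtremalWith ε B Bp) {r : ℕ}
    (hB : B ≤ pComponent A r) : ∃ z : ℤ, ∀ a ∈ coprimeComponent A r, ε a = z • a := by
  obtain ⟨hinv, -, hB'⟩ := hext
  have hPN := isCompl_posPart_negPart hA h2 hinv
  have hdisj := (disjoint_pComponent_coprimeComponent r).mono_left hB
  have hπ : ∀ (f : A →+ A), ∀ a ∈ coprimeComponent A r, f a ∈ coprimeComponent A r :=
    fun f a ha => f.map_mem_coprimeComponent ha
  rcases hB' with ⟨rfl, -⟩ | ⟨rfl, -⟩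
  · exact ⟨-1, fun a ha => by
      rw [neg_one_zsmul]; exact mem_of_disjoint_of_isCompl hPN hdisj (hπ _) ha⟩
  · exact ⟨1, fun a ha => by
      rw [one_zsmul]; exact mem_of_disjoint_of_isCompl hPN.symm hdisj (hπ _) ha⟩

theorem commute_of_restrictComp_mem_center (hA : IsAddTorsion A) (h2 : pComponent A 2 = ⊥)
    {ε : AddAut A} {B Bp : AddSubgroup A} (hext : ExtremalWith ε B Bp) {r : ℕ} (hr : r.Prime)
    (hB : B ≤ pComponent A r)
    (hcen : restrictComp ξ r ∈ AddSubgroup.center (AddAut ↥(pComponent A r))) :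
    ε + ξ = ξ + ε := by
  obtain ⟨z, hz⟩ := exists_zsmul_of_extremalWith hA h2 hext hB
  ext a
  obtain ⟨b, hb, c, hc, rfl⟩ :=
    mem_sup.mp ((isCompl_pComponent_coprimeComponent hA hr).codisjoint.eq_top ▸ mem_top a)
  have hεξb : ε (ξ b) = ξ (ε b) := by
    have := DFunLike.congr_fun (AddSubgroup.mem_center_iff.mp hcen (restrictComp ε r)) ⟨b, hb⟩
    exact congrArg Subtype.val this
  have hξc : ξ c ∈ coprimeComponent A r := ξ.toAddMonoidHom.map_mem_coprimeComponent hc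
  simp only [AddAut.add_apply, map_add, hεξb, hz c hc, hz _ hξc, map_zsmul]

end Center

end

theorem normal_involution_iff_general
    (A : Type*) [AddCommGroup A] (hA : AddMonoid.IsTorsion A)
    (h2 : pComponent A 2 = ⊥)
    (ξ : AddAut A) (hinv : ξ + ξ = 0) :
    (∃! p : ℕ, p.Prime ∧
        restrictComp ξ p ∉ AddSubgroup.center (AddAut ↥(pComponent A p))) ↔
      ∃ (ε : AddAut A) (B Bp : AddSubgroup A), ExtremalWith ε B Bp ∧ ε + ξ = ξ + ε ∧
        (∃ (ε₁ : AddAut A) (B₁ B₁p : AddSubgroup A) (q : ℕ),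
          ExtremalWith ε₁ B₁ B₁p ∧ q.Prime ∧
          B ≤ pComponent A q ∧ B₁ ≤ pComponent A q ∧ ε₁ + ξ ≠ ξ + ε₁) ∧
        (∀ (ε₂ : AddAut A) (B₂ B₂p : AddSubgroup A), ExtremalWith ε₂ B₂ B₂p →
          (∃ q r : ℕ, q.Prime ∧ r.Prime ∧ q ≠ r ∧
            B ≤ pComponent A q ∧ B₂ ≤ pComponent A r) →
          ε₂ + ξ = ξ + ε₂) := by
  constructor
  · rintro ⟨p, ⟨hp, hncp⟩, huniq⟩
    obtain ⟨hpos, hneg⟩ := posPart_ne_bot_and_negPart_ne_bot hA h2 hinv hncp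
    obtain ⟨ε, B, Bp, hext, hBp, hcomm⟩ := exists_extremalWith_commute hA h2 hinv hp hpos
    obtain ⟨ε₁, B₁, B₁p, hext₁, hB₁p, hnc₁⟩ :=
      exists_extremalWith_not_commute hA h2 hinv hp hpos hneg
    refine ⟨ε, B, Bp, hext, hcomm, ⟨ε₁, B₁, B₁p, p, hext₁, hp, hBp, hB₁p, hnc₁⟩, ?_⟩
    rintro ε₂ B₂ B₂p hext₂ ⟨q, r, hq, hr, hqr, hBq, hB₂r⟩
    have hqp : q = p := by_contra fun hne =>
      hext.2.1.1 (disjoint_self.mp ((disjoint_pComponent hq hp hne).mono hBq hBp))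
    exact commute_of_restrictComp_mem_center hA h2 hext₂ hr hB₂r
      (by_contra fun hcen => hqr (hqp.trans (huniq r ⟨hr, hcen⟩).symm))
  · rintro ⟨ε, B, Bp, -, -, ⟨ε₁, B₁, B₁p, q, hext₁, hq, hBq, hB₁q, hnc₁⟩, hcomm₂⟩
    refine ⟨q, ⟨hq, fun hcen => hnc₁ (commute_of_restrictComp_mem_center hA h2 hext₁ hq hB₁q
      hcen)⟩, fun r ⟨hr, hncr⟩ => by_contra fun hne => ?_⟩
    obtain ⟨hpos, hneg⟩ := posPart_ne_bot_and_negPart_ne_bot hA h2 hinv hncr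
    obtain ⟨ε₂, B₂, B₂p, hext₂, hB₂r, hnc₂⟩ :=
      exists_extremalWith_not_commute hA h2 hinv hr hpos hneg
    exact hnc₂ (hcomm₂ ε₂ B₂ B₂p hext₂ ⟨q, r, hq, hr, Ne.symm hne, hBq, hB₂r⟩)

/-- Let `A` be a periodic abelian group with trivial `2`-component and
no cocyclic `p`-components.  A non-central involution `ξ` is *normal* (there is exactly
one prime `p` such that the restriction of `ξ` to `A_p` is not central in `Aut A_p`) if
and only if there is an extremal involution `ε` commuting with `ξ` such that some
extremal involution in the same component as `ε` does not commute with `ξ`, while every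
extremal involution in a different component than `ε` commutes with `ξ`. -/
theorem normal_involution_iff
    (A : Type*) [AddCommGroup A] (hA : AddMonoid.IsTorsion A)
    (h2 : pComponent A 2 = ⊥)
    (hcc : ∀ p : ℕ, p.Prime → ¬ IsCocyclic ↥(pComponent A p))
    (ξ : AddAut A) (hinv : ξ + ξ = 0) (hnc : ξ ∉ AddSubgroup.center (AddAut A)) :
    (∃! p : ℕ, p.Prime ∧
        restrictComp ξ p ∉ AddSubgroup.center (AddAut ↥(pComponent A p))) ↔
      ∃ (ε : AddAut A) (B Bp : AddSubgroup A), ExtremalWith ε B Bp ∧ ε + ξ = ξ + ε ∧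
        (∃ (ε₁ : AddAut A) (B₁ B₁p : AddSubgroup A) (q : ℕ),
          ExtremalWith ε₁ B₁ B₁p ∧ q.Prime ∧
          B ≤ pComponent A q ∧ B₁ ≤ pComponent A q ∧ ε₁ + ξ ≠ ξ + ε₁) ∧
        (∀ (ε₂ : AddAut A) (B₂ B₂p : AddSubgroup A), ExtremalWith ε₂ B₂ B₂p →
          (∃ q r : ℕ, q.Prime ∧ r.Prime ∧ q ≠ r ∧
            B ≤ pComponent A q ∧ B₂ ≤ pComponent A r) →
          ε₂ + ξ = ξ + ε₂) :=
  normal_involution_iff_general A hA h2 ξ hinv
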